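/- Chvátal–Erdős theorem: let G be a finite simple graph with at least 3 vertices and let k ≥ 1. Suppose that G is k-connected and that every independent set of G has at most k elements. Then G is Hamiltonian. -/

import Mathlib

/-!
Take a longest cycle `C` (one exists since `k`-connectivity and `α(G) ≤ k` force minimum degree
at least `2`). Suppose a vertex `v` lies off `C`, and let `A` be the set of vertices of `C`
adjacent to the component `H` of `G - C` containing `v`. Maximality of `C` rules out two
configurations, each of which would splice a path through `H` into `C` and lengthen it: a vertex
of `A` whose successor on `C` is also in `A`, and two vertices of `A` with adjacent successors
(here one first reverses an arc of `C`, a Pósa rotation). Hence the successors of the vertices of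
`A`, together with `v`, are independent, so `|A| < k`; but `A` separates `v` from the rest of `C`,
contradicting `k`-connectivity.
-/

namespace SimpleGraph

variable {V : Type*} {G : SimpleGraph V}

lemma exists_walk_of_connected_induce {s : Set V} (h : (G.induce s).Connected) {x y : V}
    (hx : x ∈ s) (hy : y ∈ s) : ∃ p : G.Walk x y, ∀ z ∈ p.support, z ∈ s := by
  obtain ⟨p⟩ := h.preconnected ⟨x, hx⟩ ⟨y, hy⟩
  have hp : ∀ z ∈ (p.map (Embedding.induce s).toHom).support, z ∈ s := by
    intro z hz
    rw [Walk.support_map, List.mem_map] at hz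
    obtain ⟨z', -, rfl⟩ := hz
    exact z'.2
  exact ⟨_, hp⟩

lemma exists_adj_of_connected_induce {s : Set V} (h : (G.induce s).Connected) {x y : V}
    (hx : x ∈ s) (hy : y ∈ s) (hxy : x ≠ y) : ∃ z ∈ s, G.Adj x z := by
  obtain ⟨p, hp⟩ := exists_walk_of_connected_induce h hx hy
  exact ⟨p.snd, hp _ (p.getVert_mem_support 1), p.adj_snd (Walk.not_nil_of_ne hxy)⟩

lemma two_le_degree [Fintype V] [DecidableRel G.Adj] {k : ℕ} (hn : 3 ≤ Fintype.card V)
    (hconn : ∀ S : Finset V, S.card < k → (G.induce ((↑S : Set V)ᶜ)).Connected)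
    (hindep : ∀ s : Finset V, (∀ u ∈ s, ∀ v ∈ s, ¬ G.Adj u v) → s.card ≤ k) (v : V) :
    2 ≤ G.degree v := by
  classical
  by_contra! hdeg
  obtain ⟨u, hu⟩ : ∃ u, u ∉ insert v (G.neighborFinset v) := by
    by_contra! h
    have := Finset.card_le_card (fun x _ => h x : Finset.univ ⊆ insert v (G.neighborFinset v))
    have := Finset.card_insert_le v (G.neighborFinset v)
    rw [Finset.card_univ, card_neighborFinset_eq_degree] at *
    omega
  rw [Finset.mem_insert, mem_neighborFinset, not_or] at hu
  have hk : 2 ≤ k := by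
    refine Finset.card_pair hu.1 ▸ hindep {u, v} ?_
    simp only [Finset.mem_insert, Finset.mem_singleton]
    rintro x (rfl | rfl) y (rfl | rfl)
    exacts [G.irrefl, fun h => hu.2 h.symm, hu.2, G.irrefl]
  obtain ⟨w, hw, hvw⟩ := exists_adj_of_connected_induce
    (hconn (G.neighborFinset v) (by rw [card_neighborFinset_eq_degree]; omega))
    (x := v) (y := u) (by simp) (by simpa using hu.2) (Ne.symm hu.1)
  exact hw (by simpa using hvw)

lemma exists_isCycle_of_two_le_degree [Fintype V] [DecidableRel G.Adj] (hG : G.Connected)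
    (hdeg : ∀ v, 2 ≤ G.degree v) : ∃ (a : V) (c : G.Walk a a), c.IsCycle := by
  by_contra! h
  obtain ⟨v⟩ := hG.nonempty
  obtain ⟨w, hvw⟩ := (G.degree_pos_iff_exists_adj v).mp (by linarith [hdeg v])
  have : Nontrivial V := ⟨⟨v, w, hvw.ne⟩⟩
  obtain ⟨u, hu⟩ := (IsTree.mk hG fun _ c hc => h _ c hc).exists_vert_degree_one_of_nontrivial
  linarith [hdeg u]

def ReachableAvoiding (G : SimpleGraph V) (S : Set V) (x y : V) : Prop :=
  ∃ p : G.Walk x y, ∀ z ∈ p.support, z ∉ S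

namespace ReachableAvoiding

variable {S : Set V} {x y z : V}

lemma refl (hx : x ∉ S) : G.ReachableAvoiding S x x :=
  ⟨.nil, by simpa using hx⟩

lemma notMem (h : G.ReachableAvoiding S x y) : y ∉ S :=
  let ⟨p, hp⟩ := h; hp y p.end_mem_support

lemma concat (h : G.ReachableAvoiding S x y) (hyz : G.Adj y z) (hz : z ∉ S) :
    G.ReachableAvoiding S x z := by
  obtain ⟨p, hp⟩ := h
  refine ⟨p.concat hyz, fun t ht => ?_⟩
  rw [Walk.support_concat, List.mem_append, List.mem_singleton] at ht
  rcases ht with ht | rfl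
  exacts [hp t ht, hz]

lemma exists_isPath (hy : G.ReachableAvoiding S x y) (hz : G.ReachableAvoiding S x z) :
    ∃ p : G.Walk y z, p.IsPath ∧ ∀ t ∈ p.support, t ∉ S := by
  classical
  obtain ⟨p, hp⟩ := hy
  obtain ⟨q, hq⟩ := hz
  refine ⟨(p.reverse.append q).bypass, Walk.bypass_isPath _, fun t ht => ?_⟩
  rcases (Walk.mem_support_append_iff _ _).mp (Walk.support_bypass_subset_support _ ht)
    with ht | ht
  exacts [hp t (by simpa using ht), hq t ht]

end ReachableAvoiding

def attachments (G : SimpleGraph V) (S : Set V) (x : V) : Set V :=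
  {u | u ∈ S ∧ ∃ w, G.ReachableAvoiding S x w ∧ G.Adj u w}

lemma exists_mem_support_mem_attachments {S : Set V} {x y z : V}
    (hy : G.ReachableAvoiding S x y) (p : G.Walk y z) (hz : z ∈ S) :
    ∃ t ∈ p.support, t ∈ G.attachments S x := by
  induction p with
  | nil => exact absurd hz hy.notMem
  | @cons y y' z h q ih =>
    by_cases hy' : y' ∈ S
    · exact ⟨y', by simp, hy', y, hy, h.symm⟩
    · obtain ⟨t, ht, htA⟩ := ih (hy.concat h hy') hz
      exact ⟨t, by simp [ht], htA⟩

namespace Walk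

variable {a u v w w' x y : V}

lemma exists_eq_append_cons_of_mem_darts {p : G.Walk u v} {D : G.Dart} (hD : D ∈ p.darts) :
    ∃ (q : G.Walk u D.fst) (r : G.Walk D.snd v), p = q.append (cons D.adj r) := by
  obtain ⟨q, r, h⟩ := (isSubwalk_toWalk_adj_iff_mem_darts p).mpr hD
  exact ⟨q, r, by simpa [← append_assoc, Adj.toWalk] using h⟩

lemma exists_mem_darts_fst_eq {c : G.Walk a a} (hc : ¬ c.Nil) (hu : u ∈ c.support) :
    ∃ D ∈ c.darts, D.fst = u := by
  rw [← map_fst_darts_append, List.mem_append, List.mem_map, List.mem_singleton] at hu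
  rcases hu with ⟨D, hD, rfl⟩ | rfl
  · exact ⟨D, hD, rfl⟩
  · exact ⟨c.firstDart hc, firstDart_mem_darts hc, rfl⟩

lemma IsCycle.injOn_fst_darts {c : G.Walk a a} (hc : c.IsCycle) :
    Set.InjOn (fun D : G.Dart => D.fst) {D | D ∈ c.darts} := fun _ hD _ hD' =>
  List.inj_on_of_nodup_map (by rw [map_fst_darts]; exact hc.nodup_dropLast_support) hD hD'

lemma IsCycle.injOn_snd_darts {c : G.Walk a a} (hc : c.IsCycle) :
    Set.InjOn (fun D : G.Dart => D.snd) {D | D ∈ c.darts} := fun _ hD _ hD' =>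
  List.inj_on_of_nodup_map (by rw [map_snd_darts]; exact hc.support_nodup) hD hD'

lemma IsCycle.exists_isPath_of_mem_darts {c : G.Walk a a} (hc : c.IsCycle) {D : G.Dart}
    (hD : D ∈ c.darts) :
    ∃ d : G.Walk D.snd D.fst, d.IsPath ∧ d.length + 1 = c.length ∧
      (∀ x ∈ d.support, x ∈ c.support) ∧
      ∀ D' ∈ c.darts, D' ≠ D → D' ∈ d.darts := by
  classical
  obtain ⟨⟨u, z⟩, h⟩ := D
  have hu : u ∈ c.support := c.dart_fst_mem_support_of_mem_darts hD
  obtain ⟨z', h', d, hrot⟩ := not_nil_iff.mp ((nil_rotate hu).not.mpr hc.not_nil)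
  obtain rfl : z' = z := by
    have hD' : (⟨(u, z'), h'⟩ : G.Dart) ∈ c.darts := by
      rw [← (c.rotate_darts u hu).mem_iff, hrot]; exact List.mem_cons_self
    exact congrArg (fun D : G.Dart => D.snd) (hc.injOn_fst_darts hD' hD rfl)
  have hcyc : (cons h' d).IsCycle := hrot ▸ (isCycle_rotate hu).mpr hc
  refine ⟨d, ((cons_isCycle_iff d h').mp hcyc).1, ?_, fun x hx => ?_, fun D' hD' hne => ?_⟩
  · simpa using (congrArg length hrot).symm
  · rw [← mem_support_rotate_iff c u hu, hrot]; exact List.mem_cons_of_mem _ hx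
  · rw [← (c.rotate_darts u hu).mem_iff, hrot, darts_cons, List.mem_cons] at hD'
    exact hD'.resolve_left hne

/-- Pósa rotation: trading the edge `u v` of a path for the edge `x v` reverses the segment
from `x` to `u`. -/
lemma IsPath.reverse_append_cons {q : G.Walk x u} {r : G.Walk v y} {huv : G.Adj u v}
    (hp : (q.append (cons huv r)).IsPath) (hxv : G.Adj x v) :
    (q.reverse.append (cons hxv r)).IsPath := by
  rw [isPath_def] at hp ⊢
  simp only [support_append, support_reverse, support_cons, List.tail_cons] at hp ⊢
  exact ((List.reverse_perm _).append_right _).nodup_iff.mpr hp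

lemma isCycle_cons_append_cons {P : G.Walk w w'} {R : G.Walk y u} (hP : P.IsPath)
    (hR : R.IsPath) (hPR : P.support.Disjoint R.support) (hyu : y ≠ u) (huw : G.Adj u w)
    (hw'y : G.Adj w' y) : (cons huw (P.append (cons hw'y R))).IsCycle := by
  have h1 : (cons huw P).IsPath := hP.cons fun h => hPR h R.end_mem_support
  have h2 : (cons hw'y R).IsPath := hR.cons fun h => hPR P.end_mem_support h
  refine h1.isCycle_append h2 (by simpa using hPR) (Or.inr ?_)
  have := not_nil_iff_lt_length.mp (not_nil_of_ne hyu : ¬ R.Nil)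
  rw [length_cons]
  omega

lemma IsCycle.isHamiltonianCycle_of_forall_mem_support [DecidableEq V] {c : G.Walk a a}
    (hc : c.IsCycle) (h : ∀ v, v ∈ c.support) : c.IsHamiltonianCycle := by
  refine ⟨hc, hc.isPath_tail.isHamiltonian_of_mem fun v => ?_⟩
  have hv := h v
  rw [← cons_support_tail hc.not_nil, List.mem_cons] at hv
  rcases hv with rfl | hv
  exacts [c.tail.end_mem_support, hv]

def IsLongestCycle (c : G.Walk a a) : Prop :=
  c.IsCycle ∧ ∀ ⦃b : V⦄ (q : G.Walk b b), q.IsCycle → q.length ≤ c.length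

lemma exists_isLongestCycle [Finite V] (h : ∃ (a : V) (c : G.Walk a a), c.IsCycle) :
    ∃ (a : V) (c : G.Walk a a), c.IsLongestCycle := by
  have := Fintype.ofFinite V
  let s := {n | ∃ (a : V) (c : G.Walk a a), c.IsCycle ∧ c.length = n}
  have hs : s.Finite := (Set.finite_le_nat (Fintype.card V)).subset
    fun n ⟨_, c, hc, hn⟩ => hn ▸ by simpa using hc.support_nodup.length_le_card
  obtain ⟨a, c, hc⟩ := h
  obtain ⟨_, ⟨b, c', hc', rfl⟩, hmax⟩ := hs.exists_maximal ⟨_, a, c, hc, rfl⟩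
  exact ⟨b, c', hc', fun _ q hq => (le_total _ _).elim id (hmax ⟨_, q, hq, rfl⟩)⟩

section IsLongestCycle

variable {c : G.Walk a a} (hc : c.IsLongestCycle)
include hc

lemma IsLongestCycle.not_adj_of_isPath (huw : G.Adj u w) {P : G.Walk w w'} (hP : P.IsPath)
    (hPc : ∀ x ∈ P.support, x ∉ c.support) {R : G.Walk y u} (hR : R.IsPath)
    (hRc : ∀ x ∈ R.support, x ∈ c.support) (hRlen : c.length ≤ R.length + 1) :
    ¬ G.Adj w' y := by
  intro hw'y
  have hyu : y ≠ u := by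
    rintro rfl
    have := hc.1.three_le_length
    rw [(isPath_iff_nil.mp hR).length_eq_zero] at hRlen
    omega
  have hPR : P.support.Disjoint R.support := fun x hxP hxR => hPc x hxP (hRc x hxR)
  have := hc.2 _ (isCycle_cons_append_cons hP hR hPR hyu huw hw'y)
  simp only [length_cons, length_append] at this
  omega

lemma IsLongestCycle.snd_notMem_attachments {D : G.Dart} (hD : D ∈ c.darts)
    (hfst : D.fst ∈ G.attachments {x | x ∈ c.support} v) :
    D.snd ∉ G.attachments {x | x ∈ c.support} v := by
  rintro ⟨-, w', hw', hw'D⟩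
  obtain ⟨-, w, hw, hDw⟩ := hfst
  obtain ⟨P, hP, hPc⟩ := hw.exists_isPath hw'
  obtain ⟨d, hd, hdlen, hdc, -⟩ := hc.1.exists_isPath_of_mem_darts hD
  exact hc.not_adj_of_isPath hDw hP hPc hd hdc hdlen.ge hw'D.symm

lemma IsLongestCycle.not_adj_snd {D D' : G.Dart} (hD : D ∈ c.darts) (hD' : D' ∈ c.darts)
    (hne : D' ≠ D) (hfst : D.fst ∈ G.attachments {x | x ∈ c.support} v)
    (hfst' : D'.fst ∈ G.attachments {x | x ∈ c.support} v) : ¬ G.Adj D.snd D'.snd := by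
  intro hadj
  obtain ⟨-, w, hw, hDw⟩ := hfst
  obtain ⟨-, w', hw', hD'w'⟩ := hfst'
  obtain ⟨P, hP, hPc⟩ := hw.exists_isPath hw'
  obtain ⟨d, hd, hdlen, hdc, hdD⟩ := hc.1.exists_isPath_of_mem_darts hD
  obtain ⟨q, r, rfl⟩ := exists_eq_append_cons_of_mem_darts (hdD D' hD' hne)
  refine hc.not_adj_of_isPath hDw hP hPc (hd.reverse_append_cons hadj) (fun x hx => hdc x ?_) ?_
    hD'w'.symm
  · simp only [mem_support_append_iff, support_reverse, List.mem_reverse, support_cons,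
      List.mem_cons] at hx ⊢
    rcases hx with hx | rfl | hx
    exacts [Or.inl hx, Or.inl q.start_mem_support, Or.inr (Or.inr hx)]
  · simpa using hdlen.ge

theorem IsLongestCycle.ncard_attachments_lt [Finite V] {k : ℕ}
    (hindep : ∀ s : Finset V, (∀ u ∈ s, ∀ v ∈ s, ¬ G.Adj u v) → s.card ≤ k)
    (hv : v ∉ c.support) : (G.attachments {x | x ∈ c.support} v).ncard < k := by
  classical
  set A := G.attachments {x | x ∈ c.support} v
  set Ds := c.darts.toFinset.filter (fun D => D.fst ∈ A)
  have hDs : ∀ D ∈ Ds, D ∈ c.darts ∧ D.fst ∈ A := by simp [Ds]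
  have hA : A ⊆ ↑(Ds.image fun D => D.fst) := by
    intro u hu
    obtain ⟨D, hD, rfl⟩ := exists_mem_darts_fst_eq hc.1.not_nil hu.1
    exact Finset.mem_image_of_mem _ (by simp [Ds, hD, hu])
  have hinj : Set.InjOn (fun D : G.Dart => D.snd) Ds :=
    fun D hD D' hD' => hc.1.injOn_snd_darts (hDs D hD).1 (hDs D' hD').1
  have hvD : ∀ D ∈ Ds, ¬ G.Adj v D.snd := fun D hD hadj =>
    hc.snd_notMem_attachments (hDs D hD).1 (hDs D hD).2
      ⟨c.dart_snd_mem_support_of_mem_darts (hDs D hD).1, v, .refl hv, hadj.symm⟩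
  have hvS : v ∉ Ds.image fun D => D.snd := by
    simp only [Finset.mem_image, not_exists, not_and]
    rintro D hD rfl
    exact hv (c.dart_snd_mem_support_of_mem_darts (hDs D hD).1)
  have hind : ∀ x ∈ insert v (Ds.image fun D => D.snd),
      ∀ y ∈ insert v (Ds.image fun D => D.snd), ¬ G.Adj x y := by
    simp only [Finset.mem_insert, Finset.mem_image]
    rintro x (rfl | ⟨D, hD, rfl⟩) y (rfl | ⟨D', hD', rfl⟩)
    · exact G.irrefl
    · exact hvD D' hD'
    · exact fun h => hvD D hD h.symm
    · obtain rfl | hne := eq_or_ne D' D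
      · exact G.irrefl
      · exact hc.not_adj_snd (hDs D hD).1 (hDs D' hD').1 hne (hDs D hD).2 (hDs D' hD').2
  calc A.ncard ≤ (Ds.image fun D => D.fst).card :=
        (Set.ncard_le_ncard hA (Finset.finite_toSet _)).trans (Set.ncard_coe_finset _).le
    _ ≤ Ds.card := Finset.card_image_le
    _ = (Ds.image fun D => D.snd).card := (Finset.card_image_of_injOn hinj).symm
    _ < (insert v (Ds.image fun D => D.snd)).card := by
        rw [Finset.card_insert_of_notMem hvS]; omega
    _ ≤ k := hindep _ hind

theorem IsLongestCycle.mem_support [Finite V] {k : ℕ}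
    (hconn : ∀ S : Finset V, S.card < k → (G.induce ((↑S : Set V)ᶜ)).Connected)
    (hindep : ∀ s : Finset V, (∀ u ∈ s, ∀ v ∈ s, ¬ G.Adj u v) → s.card ≤ k) (v : V) :
    v ∈ c.support := by
  by_contra hv
  set A := G.attachments {x | x ∈ c.support} v
  obtain ⟨z, hzc, hzA⟩ : ∃ z ∈ c.support, z ∉ A := by
    have hD := firstDart_mem_darts hc.1.not_nil
    by_cases h : (c.firstDart hc.1.not_nil).fst ∈ A
    · exact ⟨_, c.dart_snd_mem_support_of_mem_darts hD, hc.snd_notMem_attachments hD h⟩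
    · exact ⟨_, c.dart_fst_mem_support_of_mem_darts hD, h⟩
  set N := (Set.toFinite A).toFinset
  have hN : N.card < k := by
    rw [← Set.ncard_eq_toFinset_card]; exact hc.ncard_attachments_lt hindep hv
  obtain ⟨p, hp⟩ := exists_walk_of_connected_induce (hconn N hN) (x := v) (y := z)
    (by simpa [N, A] using fun h => hv h.1) (by simpa [N] using hzA)
  obtain ⟨t, ht, htA⟩ :=
    exists_mem_support_mem_attachments (.refl (S := {x | x ∈ c.support}) hv) p hzc
  exact hp t ht (by simpa [N] using htA)

end IsLongestCycle

end Walk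

end SimpleGraph

theorem chvatal_erdos_theorem_general
    {V : Type*} [Fintype V] [DecidableEq V] (G : SimpleGraph V) (k : ℕ)
    (hk : 1 ≤ k) (hn : 3 ≤ Fintype.card V)
    (hconn : ∀ S : Finset V, S.card < k → (G.induce ((↑S : Set V)ᶜ)).Connected)
    (hindep : ∀ s : Finset V, (∀ u ∈ s, ∀ v ∈ s, ¬ G.Adj u v) → s.card ≤ k) :
    G.IsHamiltonian := by
  classical
  have hG : G.Connected := by
    have h := hconn ∅ (by rwa [Finset.card_empty])
    rw [Finset.coe_empty, Set.compl_empty] at h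
    exact (SimpleGraph.induceUnivIso G).connected_iff.mp h
  obtain ⟨a, c, hc⟩ := SimpleGraph.Walk.exists_isLongestCycle
    (SimpleGraph.exists_isCycle_of_two_le_degree hG (SimpleGraph.two_le_degree hn hconn hindep))
  exact fun _ =>
    ⟨a, c, hc.1.isHamiltonianCycle_of_forall_mem_support (hc.mem_support hconn hindep)⟩

theorem chvatal_erdos_theorem
    {V : Type*} [Fintype V] [DecidableEq V] (G : SimpleGraph V) (k : ℕ)
    (hk : 1 ≤ k) (hn : 3 ≤ Fintype.card V)
    (hcard : k < Fintype.card V)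
    (hconn : ∀ S : Finset V, S.card < k → (G.induce ((↑S : Set V)ᶜ)).Connected)
    (hindep : ∀ s : Finset V, (∀ u ∈ s, ∀ v ∈ s, ¬ G.Adj u v) → s.card ≤ k) :
    G.IsHamiltonian :=
  chvatal_erdos_theorem_general G k hk hn hconn hindep
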